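/- Let y ∈ ℓ∞, m ∈ ℕ, let A be an operator in the convex hull of {σ_n : 1 ≤ n ≤ m}, and set s = (I−T)y. Then for all k ≥ 0 and r ≥ 1, max_{k < i ≤ k+r} (As)_i ≥ −2m‖y‖_{ℓ∞}/r. Consequently, for every k ≥ 0, sup_{i > k} (As)_i ≥ 0, i.e. limsup_{i→∞} (As)_i ≥ 0. -/

import Mathlib

/-!
For `s = (I - T) y` the partial sums of `σₙ s` telescope: writing `N = n q + ρ` with `ρ ≤ n`,
`∑_{i<N} (σₙ s)ᵢ = (n - ρ) (T y)_q + ρ y_q`, which is bounded by `n ‖y‖`. Hence every block of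
`r` consecutive entries of `σₙ s` sums to at least `-2n‖y‖`. For fixed indices this is a half-space
condition, linear in the operator, so it passes to the convex hull of the `σₙ` with `n ≤ m`. The
maximum over a block is at least its average, and taking `r → ∞` shows that entries `≥ -ε` occur
in every tail, which gives the two statements about suprema.
-/

open Filter BoundedContinuousFunction

noncomputable section

/-- `ℓ∞`: the space of bounded real sequences (indexed from `0`). -/
abbrev LInf : Type := BoundedContinuousFunction ℕ ℝ

/-- The translation (shift) operator `T(x₁,x₂,…) = (0,x₁,x₂,…)` (0-indexed). -/
def shift (x : LInf) : LInf :=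
  BoundedContinuousFunction.ofNormedAddCommGroup
    (fun n => if n = 0 then 0 else x (n - 1)) continuous_of_discreteTopology ‖x‖
    (by
      intro n
      rcases n with _ | n
      · simp [norm_nonneg x]
      · simpa using x.norm_coe_le_norm n)

/-- The dilation operator `σ_m`, repeating each entry `m` times
(0-indexed: `(σ_m x)ₙ = x_{⌊n/m⌋}`, i.e. `(σ_m x)ₙ = x_{⌈n/m⌉}` in 1-indexed notation). -/
def dil (m : ℕ) (x : LInf) : LInf :=
  x.compContinuous ⟨fun n => n / m, continuous_of_discreteTopology⟩

/-- The dilation operator `σ_m` as a bounded linear operator on `ℓ∞`. -/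
def dilOp (m : ℕ) : LInf →L[ℝ] LInf :=
  LinearMap.mkContinuous
    { toFun := dil m
      map_add' := fun x y => by ext n; simp [dil]
      map_smul' := fun c x => by ext n; simp [dil] }
    1
    (fun x => by
      rw [one_mul]
      exact x.norm_compContinuous_le _)

open Finset

@[simp] lemma shift_apply_zero (x : LInf) : shift x 0 = 0 := rfl

@[simp] lemma shift_apply_succ (x : LInf) (n : ℕ) : shift x (n + 1) = x n := rfl

lemma norm_shift_le (x : LInf) : ‖shift x‖ ≤ ‖x‖ :=
  norm_ofNormedAddCommGroup_le _ (norm_nonneg x) _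

lemma dilOp_apply (n : ℕ) (x : LInf) (i : ℕ) : dilOp n x i = x (i / n) := rfl

lemma sum_range_sub_shift (y : LInf) (q : ℕ) : ∑ j ∈ range q, (y - shift y) j = shift y q := by
  simpa using sum_range_sub (fun j => shift y j) q

lemma sum_range_comp_mul_add_div {M : Type*} [AddCommMonoid M] (f : ℕ → M) {n ρ : ℕ}
    (hρ : ρ ≤ n) (q : ℕ) : ∑ i ∈ range ρ, f ((n * q + i) / n) = ρ • f q := by
  trans ∑ _i ∈ range ρ, f q
  · refine sum_congr rfl fun i hi => ?_
    rw [Nat.mul_add_div (by grind), Nat.div_eq_of_lt (by grind), add_zero]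
  · rw [sum_const, card_range]

lemma sum_range_mul_add_comp_div {M : Type*} [AddCommMonoid M] (f : ℕ → M) {n ρ : ℕ}
    (hρ : ρ ≤ n) (q : ℕ) :
    ∑ i ∈ range (n * q + ρ), f (i / n) = n • ∑ j ∈ range q, f j + ρ • f q := by
  rw [sum_range_add, sum_range_comp_mul_add_div f hρ]
  congr 1
  induction q with
  | zero => simp
  | succ q ih => rw [Nat.mul_succ, sum_range_add, ih, sum_range_comp_mul_add_div f le_rfl,
      sum_range_succ, smul_add]

lemma abs_sum_range_dilOp_sub_shift_le (y : LInf) {n : ℕ} (hn : 0 < n) (N : ℕ) :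
    |∑ i ∈ range N, dilOp n (y - shift y) i| ≤ n * ‖y‖ := by
  obtain ⟨q, ρ, hρn, rfl⟩ : ∃ q ρ, ρ ≤ n ∧ N = n * q + ρ :=
    ⟨N / n, N % n, (Nat.mod_lt N hn).le, (Nat.div_add_mod N n).symm⟩
  have hρ : (ρ : ℝ) ≤ n := by exact_mod_cast hρn
  have hsum : ∑ i ∈ range (n * q + ρ), dilOp n (y - shift y) i
      = (n - ρ) * shift y q + ρ * y q := by
    simp only [dilOp_apply]
    rw [sum_range_mul_add_comp_div _ hρn, sum_range_sub_shift]
    simp only [nsmul_eq_mul, BoundedContinuousFunction.coe_sub, Pi.sub_apply]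
    ring
  have hshift : |shift y q| ≤ ‖y‖ := (norm_coe_le_norm _ q).trans (norm_shift_le y)
  have hy : |y q| ≤ ‖y‖ := norm_coe_le_norm y q
  rw [hsum, abs_le]
  constructor <;> nlinarith [abs_le.mp hshift, abs_le.mp hy, Nat.cast_nonneg (α := ℝ) ρ]

lemma neg_two_mul_norm_le_sum_Ico_dilOp (y : LInf) {n : ℕ} (hn : 0 < n) (k r : ℕ) :
    -(2 * n * ‖y‖) ≤ ∑ i ∈ Ico k (k + r), dilOp n (y - shift y) i := by
  rw [sum_Ico_eq_sub _ (Nat.le_add_right k r)]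
  have hk := abs_le.mp (abs_sum_range_dilOp_sub_shift_le y hn k)
  have hkr := abs_le.mp (abs_sum_range_dilOp_sub_shift_le y hn (k + r))
  linarith [hk.2, hkr.1]

lemma neg_two_mul_norm_le_sum_Ico_of_mem_convexHull (y : LInf) {m : ℕ} {A : LInf →L[ℝ] LInf}
    (hA : A ∈ convexHull ℝ {S : LInf →L[ℝ] LInf | ∃ n : ℕ, 1 ≤ n ∧ n ≤ m ∧ S = dilOp n})
    (k r : ℕ) : -(2 * m * ‖y‖) ≤ ∑ i ∈ Ico k (k + r), A (y - shift y) i := by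
  have hlin : IsLinearMap ℝ fun B : LInf →L[ℝ] LInf => ∑ i ∈ Ico k (k + r), B (y - shift y) i :=
    ⟨fun B C => by simp [sum_add_distrib], fun c B => by
      simp only [FunLike.coe_smul, Pi.smul_apply, BoundedContinuousFunction.smul_apply,
        smul_eq_mul, mul_sum]⟩
  refine convexHull_min ?_ (convex_halfSpace_ge hlin _) hA
  rintro _ ⟨n, hn, hnm, rfl⟩
  refine le_trans ?_ (neg_two_mul_norm_le_sum_Ico_dilOp y hn k r)
  have : (n : ℝ) ≤ m := by exact_mod_cast hnm
  nlinarith [norm_nonneg y]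

lemma div_card_le_sup'_of_le_sum {ι : Type*} {s : Finset ι} (hs : s.Nonempty) {f : ι → ℝ}
    {c : ℝ} (h : c ≤ ∑ i ∈ s, f i) : c / #s ≤ s.sup' hs f := by
  rw [div_le_iff₀ (by exact_mod_cast hs.card_pos), mul_comm, ← nsmul_eq_mul]
  exact h.trans (sum_le_card_nsmul _ _ _ fun i hi => le_sup' f hi)

lemma frequently_neg_le_of_forall_div_le_sup' {a : ℕ → ℝ} {C : ℝ}
    (h : ∀ k r : ℕ, (hr : 1 ≤ r) →
      -C / r ≤ (Ico k (k + r)).sup' (nonempty_Ico.mpr (Nat.lt_add_of_pos_right hr)) a)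
    {ε : ℝ} (hε : 0 < ε) : ∃ᶠ i in atTop, -ε ≤ a i := by
  obtain ⟨N, hN⟩ := exists_nat_gt (C / ε)
  have hr : 1 ≤ N + 1 := Nat.le_add_left 1 N
  have hC : C / (N + 1 : ℕ) < ε := by
    rw [div_lt_iff₀ (by positivity)]
    rw [div_lt_iff₀ hε] at hN
    push_cast
    nlinarith
  refine frequently_atTop.mpr fun k => ?_
  obtain ⟨i, hi, hmax⟩ := exists_mem_eq_sup' (nonempty_Ico.mpr (Nat.lt_add_of_pos_right hr)) a
  refine ⟨i, (mem_Ico.mp hi).1, ?_⟩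
  have := h k (N + 1) hr
  rw [hmax, neg_div] at this
  linarith

lemma nonneg_biSup_Ioi_of_frequently {a : ℕ → ℝ} (ha : BddAbove (Set.range a))
    (h : ∀ ε > 0, ∃ᶠ i in atTop, -ε ≤ a i) (k : ℕ) : 0 ≤ ⨆ i ∈ Set.Ioi k, a i := by
  obtain ⟨C, hC⟩ := ha
  have hbdd : BddAbove (Set.range fun i => ⨆ _ : i ∈ Set.Ioi k, a i) :=
    ⟨max C 0, by
      rintro _ ⟨i, rfl⟩
      exact Real.iSup_le (fun _ => (hC ⟨i, rfl⟩).trans (le_max_left _ _)) (le_max_right _ _)⟩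
  refine le_of_forall_sub_le fun ε hε => ?_
  obtain ⟨i, hik, hi⟩ := frequently_atTop.mp (h ε hε) (k + 1)
  calc 0 - ε ≤ a i := by linarith
    _ = ⨆ _ : i ∈ Set.Ioi k, a i := (ciSup_pos (f := fun _ => a i) (Set.mem_Ioi.mpr hik)).symm
    _ ≤ ⨆ i ∈ Set.Ioi k, a i := le_ciSup hbdd i

lemma nonneg_limsup_of_frequently {a : ℕ → ℝ} (ha : BddAbove (Set.range a))
    (h : ∀ ε > 0, ∃ᶠ i in atTop, -ε ≤ a i) : 0 ≤ limsup a atTop :=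
  le_of_forall_sub_le fun ε hε => by
    simpa using le_limsup_of_frequently_le (h ε hε) ha.isBoundedUnder_of_range

theorem max_dilation_shift_difference_nonneg (y : LInf) (m : ℕ)
    (A : LInf →L[ℝ] LInf)
    (hA : A ∈ convexHull ℝ {S : LInf →L[ℝ] LInf | ∃ n : ℕ, 1 ≤ n ∧ n ≤ m ∧ S = dilOp n}) :
    (∀ k r : ℕ, (hr : 1 ≤ r) →
      -(2 * m * ‖y‖) / r ≤
        (Finset.Ico k (k + r)).sup'
          (Finset.nonempty_Ico.mpr (Nat.lt_add_of_pos_right hr))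
          (fun i => (A (y - shift y)) i)) ∧
    (∀ k : ℕ, 0 ≤ ⨆ i ∈ Set.Ioi k, (A (y - shift y)) i) ∧
    0 ≤ Filter.limsup (fun i => (A (y - shift y)) i) Filter.atTop := by
  have hmax : ∀ k r : ℕ, (hr : 1 ≤ r) →
      -(2 * m * ‖y‖) / r ≤ (Ico k (k + r)).sup' (nonempty_Ico.mpr (Nat.lt_add_of_pos_right hr))
        (fun i => (A (y - shift y)) i) := fun k r hr => by
    have := div_card_le_sup'_of_le_sum (nonempty_Ico.mpr (Nat.lt_add_of_pos_right hr))
      (neg_two_mul_norm_le_sum_Ico_of_mem_convexHull y hA k r)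
    rwa [Nat.card_Ico, Nat.add_sub_cancel_left] at this
  have hbdd : BddAbove (Set.range fun i => A (y - shift y) i) :=
    (A (y - shift y)).isBounded_range.bddAbove
  have hfreq := fun ε (hε : 0 < ε) => frequently_neg_le_of_forall_div_le_sup' hmax hε
  exact ⟨hmax, nonneg_biSup_Ioi_of_frequently hbdd hfreq, nonneg_limsup_of_frequently hbdd hfreq⟩

end
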